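/- arXiv:math/0505264 — 2 statements merged into one kernel-verified Lean document; each statement's English description precedes it below -/
import Mathlib

section
/- Let f : Δ → Δ be a holomorphic self-map of the open unit disc, and let (z_k) be a sequence in Δ converging to 1 nontangentially such that f(z_k) = z_k + o(|z_k - 1|) as k → ∞ (i.e. (f(z_k) - z_k)/|z_k - 1| → 0). Then for every z ∈ Δ the Julia-type inequality |1 - f(z)|² / (1 - |f(z)|²) ≤ |1 - z|² / (1 - |z|²) holds. -/
/-!
Schwarz–Pick says that `f` does not increase the pseudo-hyperbolic distance
`‖(a - b) / (1 - conj a * b)‖`, which, rewritten through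
`‖1 - conj a * b‖² - ‖a - b‖² = (1 - ‖a‖²)(1 - ‖b‖²)`, becomes
`‖1 - conj (f a) * f b‖² / (1 - ‖f b‖²)`
  `≤ (1 - ‖f a‖²) / (1 - ‖a‖²) · ‖1 - conj a * b‖² / (1 - ‖b‖²)`.
Put `a = z k`, `b = w` and let `k → ∞`: the outer terms converge to the two sides of the
inequality, and the dilation factor `(1 - ‖f (z k)‖²) / (1 - ‖z k‖²)` tends to `1`, because
`f (z k) - z k = o(|z k - 1|)` and, nontangentially, `|z k - 1| = O(1 - ‖z k‖)`.
-/

open Metric Filter Asymptotics Topology ComplexConjugate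

lemma one_sub_sq_norm_pos {E : Type*} [SeminormedAddGroup E] {x : E} (hx : ‖x‖ < 1) :
    0 < 1 - ‖x‖ ^ 2 :=
  sub_pos.2 (pow_lt_one₀ (norm_nonneg x) hx two_ne_zero)

noncomputable def moebius (a ζ : ℂ) : ℂ := (a - ζ) / (1 - conj a * ζ)

section Moebius

variable {a b : ℂ}

lemma one_sub_conj_mul_ne_zero (ha : ‖a‖ < 1) (hb : ‖b‖ < 1) : 1 - conj a * b ≠ 0 := by
  refine sub_ne_zero.2 fun h => ?_
  have : ‖conj a * b‖ < 1 := by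
    rw [norm_mul, Complex.norm_conj]
    nlinarith [norm_nonneg a, norm_nonneg b]
  simp [← h] at this

lemma sq_norm_one_sub_conj_mul_sub_sq_norm_sub (a b : ℂ) :
    ‖1 - conj a * b‖ ^ 2 - ‖a - b‖ ^ 2 = (1 - ‖a‖ ^ 2) * (1 - ‖b‖ ^ 2) := by
  simp only [Complex.sq_norm, Complex.normSq_apply, Complex.sub_re, Complex.sub_im,
    Complex.mul_re, Complex.mul_im, Complex.conj_re, Complex.conj_im, Complex.one_re,
    Complex.one_im]
  ring

lemma one_sub_sq_norm_moebius (ha : ‖a‖ < 1) (hb : ‖b‖ < 1) :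
    1 - ‖moebius a b‖ ^ 2 = (1 - ‖a‖ ^ 2) * (1 - ‖b‖ ^ 2) / ‖1 - conj a * b‖ ^ 2 := by
  have hD : ‖1 - conj a * b‖ ≠ 0 := norm_ne_zero_iff.2 (one_sub_conj_mul_ne_zero ha hb)
  rw [← sq_norm_one_sub_conj_mul_sub_sq_norm_sub, moebius, norm_div, div_pow, sub_div,
    div_self (pow_ne_zero 2 hD)]

lemma norm_moebius_lt_one (ha : ‖a‖ < 1) (hb : ‖b‖ < 1) : ‖moebius a b‖ < 1 := by
  have hpos : 0 < 1 - ‖moebius a b‖ ^ 2 := by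
    rw [one_sub_sq_norm_moebius ha hb]
    have := one_sub_conj_mul_ne_zero ha hb
    have := one_sub_sq_norm_pos ha
    have := one_sub_sq_norm_pos hb
    positivity
  nlinarith [norm_nonneg (moebius a b)]

lemma mapsTo_moebius (ha : ‖a‖ < 1) : Set.MapsTo (moebius a) (ball 0 1) (ball 0 1) :=
  fun _ hζ => mem_ball_zero_iff.2 (norm_moebius_lt_one ha (mem_ball_zero_iff.1 hζ))

lemma moebius_self (a : ℂ) : moebius a a = 0 := by simp [moebius]

lemma moebius_zero (a : ℂ) : moebius a 0 = a := by simp [moebius]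

lemma moebius_moebius (ha : ‖a‖ < 1) (hb : ‖b‖ < 1) : moebius a (moebius a b) = b := by
  have hD := one_sub_conj_mul_ne_zero ha hb
  have ha' : 1 - conj a * a ≠ 0 := one_sub_conj_mul_ne_zero ha ha
  have hnum : a - (a - b) / (1 - conj a * b) = b * (1 - conj a * a) / (1 - conj a * b) := by
    rw [eq_div_iff hD, sub_mul, div_mul_cancel₀ _ hD]
    ring
  have hden : 1 - conj a * ((a - b) / (1 - conj a * b)) =
      (1 - conj a * a) / (1 - conj a * b) := by
    rw [eq_div_iff hD, sub_mul, mul_div_assoc', div_mul_cancel₀ _ hD]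
    ring
  rw [moebius, moebius, hnum, hden, div_div_div_cancel_right₀ hD, mul_div_cancel_right₀ _ ha']

lemma differentiableOn_moebius (ha : ‖a‖ < 1) : DifferentiableOn ℂ (moebius a) (ball 0 1) :=
  ((differentiableOn_const a).sub differentiableOn_id).div
    ((differentiableOn_const 1).sub ((differentiableOn_const _).mul differentiableOn_id))
    fun _ hζ => one_sub_conj_mul_ne_zero ha (mem_ball_zero_iff.1 hζ)

end Moebius

section SchwarzPick

variable {f : ℂ → ℂ} {a b : ℂ}

/-- Schwarz–Pick: Schwarz's lemma applied to `moebius (f a) ∘ f ∘ moebius a`, which fixes `0`. -/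
theorem norm_moebius_le_of_mapsTo_ball (hf : DifferentiableOn ℂ f (ball 0 1))
    (hmap : Set.MapsTo f (ball 0 1) (ball 0 1)) (ha : ‖a‖ < 1) (hb : ‖b‖ < 1) :
    ‖moebius (f a) (f b)‖ ≤ ‖moebius a b‖ := by
  have hfa : ‖f a‖ < 1 := mem_ball_zero_iff.1 (hmap (mem_ball_zero_iff.2 ha))
  have hmaps : Set.MapsTo (moebius (f a) ∘ f ∘ moebius a) (ball 0 1) (ball 0 1) :=
    (mapsTo_moebius hfa).comp (hmap.comp (mapsTo_moebius ha))
  have hschwarz := Complex.norm_le_norm_of_mapsTo_ball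
    (((differentiableOn_moebius hfa).comp hf hmap).comp (differentiableOn_moebius ha)
      (mapsTo_moebius ha))
    (hmaps.mono_right ball_subset_closedBall) (by simp [moebius_zero, moebius_self])
    (norm_moebius_lt_one ha hb)
  simpa [moebius_moebius ha hb] using hschwarz

theorem sq_norm_one_sub_conj_mul_div_le_of_mapsTo_ball (hf : DifferentiableOn ℂ f (ball 0 1))
    (hmap : Set.MapsTo f (ball 0 1) (ball 0 1)) (ha : ‖a‖ < 1) (hb : ‖b‖ < 1) :
    ‖1 - conj (f a) * f b‖ ^ 2 / (1 - ‖f b‖ ^ 2) ≤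
      (1 - ‖f a‖ ^ 2) / (1 - ‖a‖ ^ 2) * (‖1 - conj a * b‖ ^ 2 / (1 - ‖b‖ ^ 2)) := by
  have hfa : ‖f a‖ < 1 := mem_ball_zero_iff.1 (hmap (mem_ball_zero_iff.2 ha))
  have hfb : ‖f b‖ < 1 := mem_ball_zero_iff.1 (hmap (mem_ball_zero_iff.2 hb))
  have hD := norm_pos_iff.2 (one_sub_conj_mul_ne_zero ha hb)
  have hfD := norm_pos_iff.2 (one_sub_conj_mul_ne_zero hfa hfb)
  have hpick : 1 - ‖moebius a b‖ ^ 2 ≤ 1 - ‖moebius (f a) (f b)‖ ^ 2 := by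
    gcongr
    exact norm_moebius_le_of_mapsTo_ball hf hmap ha hb
  rw [one_sub_sq_norm_moebius ha hb, one_sub_sq_norm_moebius hfa hfb,
    div_le_div_iff₀ (by positivity) (by positivity)] at hpick
  rw [div_mul_div_comm, div_le_div_iff₀ (one_sub_sq_norm_pos hfb)
    (mul_pos (one_sub_sq_norm_pos ha) (one_sub_sq_norm_pos hb))]
  linarith

end SchwarzPick

section BoundaryLimit

variable {α E : Type*} [SeminormedAddCommGroup E] {l : Filter α} {a b : α → E}

theorem isEquivalent_one_sub_sq_norm (h : (b - a) =o[l] fun x => 1 - ‖a x‖) :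
    (fun x => 1 - ‖b x‖ ^ 2) ~[l] fun x => 1 - ‖a x‖ ^ 2 := by
  have hnorm : (fun x => ‖b x‖ - ‖a x‖) =o[l] fun x => 1 - ‖a x‖ :=
    (IsBigO.of_bound' (Eventually.of_forall fun x => by
      simpa only [Real.norm_eq_abs, Pi.sub_apply] using
        abs_norm_sub_norm_le (b x) (a x))).trans_isLittleO h
  have hminus : (fun x => 1 - ‖b x‖) ~[l] fun x => 1 - ‖a x‖ := by
    simpa [IsEquivalent, Pi.sub_def] using hnorm.neg_left
  have hplus : (fun x => 1 + ‖b x‖) ~[l] fun x => 1 + ‖a x‖ := by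
    refine (hnorm.trans_isBigO (IsBigO.of_bound' (Eventually.of_forall fun x => ?_))).congr_left
      fun x => by simp only [Pi.sub_apply]; ring
    rw [Real.norm_eq_abs, Real.norm_eq_abs, abs_of_nonneg (by positivity : 0 ≤ 1 + ‖a x‖)]
    exact abs_le.2 ⟨by linarith [norm_nonneg (a x)], by linarith [norm_nonneg (a x)]⟩
  convert hminus.mul hplus using 1 <;> ext x <;> simp only [Pi.mul_apply] <;> ring

theorem tendsto_one_sub_sq_norm_div (ha : ∀ x, ‖a x‖ < 1)
    (h : (b - a) =o[l] fun x => 1 - ‖a x‖) :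
    Tendsto (fun x => (1 - ‖b x‖ ^ 2) / (1 - ‖a x‖ ^ 2)) l (𝓝 1) :=
  (isEquivalent_iff_tendsto_one (Eventually.of_forall fun x =>
    (one_sub_sq_norm_pos (ha x)).ne')).1 (isEquivalent_one_sub_sq_norm h)

theorem isLittleO_one_sub_norm_of_tendsto_div {u z : α → ℂ} (hz : ∀ x, ‖z x‖ < 1)
    (hu : Tendsto (fun x => u x / (‖z x - 1‖ : ℂ)) l (𝓝 0)) {C : ℝ}
    (hC : ∀ x, ‖1 - z x‖ ≤ C * (1 - ‖z x‖)) :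
    u =o[l] fun x => 1 - ‖z x‖ := by
  have hne : ∀ x, (‖z x - 1‖ : ℂ) ≠ 0 := fun x => by
    simpa [sub_eq_zero] using ne_of_apply_ne norm ((hz x).trans_eq norm_one.symm).ne
  refine ((isLittleO_iff_tendsto' (Eventually.of_forall fun x h => absurd h (hne x))).2
    hu).trans_isBigO (IsBigO.of_bound C (Eventually.of_forall fun x => ?_))
  rw [Complex.norm_real, norm_norm, norm_sub_rev, Real.norm_of_nonneg (sub_nonneg.2 (hz x).le)]
  exact hC x

theorem tendsto_sq_norm_one_sub_conj_mul_div {a : α → ℂ} (ha : Tendsto a l (𝓝 1)) (b : ℂ) :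
    Tendsto (fun x => ‖1 - conj (a x) * b‖ ^ 2 / (1 - ‖b‖ ^ 2)) l
      (𝓝 (‖1 - b‖ ^ 2 / (1 - ‖b‖ ^ 2))) := by
  simpa using ((tendsto_const_nhds.sub
    (((Complex.continuous_conj.tendsto 1).comp ha).mul_const b)).norm.pow 2).div_const _

end BoundaryLimit

/-- The special case (3.7) of Julia's theorem established in the proof of
Proposition 3.2. -/
theorem julia_inequality (f : ℂ → ℂ)
    (hf : DifferentiableOn ℂ f (ball (0 : ℂ) 1))
    (hmap : Set.MapsTo f (ball (0 : ℂ) 1) (ball (0 : ℂ) 1))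
    (z : ℕ → ℂ) (hz : ∀ k, z k ∈ ball (0 : ℂ) 1)
    (hlim : Tendsto z atTop (nhds 1))
    (hnontan : ∃ C > 0, ∀ k, ‖1 - z k‖ ≤ C * (1 - ‖z k‖))
    (hasym : Tendsto (fun k => (f (z k) - z k) / (‖z k - 1‖ : ℂ))
      atTop (nhds 0)) :
    ∀ w ∈ ball (0 : ℂ) 1,
      ‖1 - f w‖ ^ 2 / (1 - ‖f w‖ ^ 2) ≤
        ‖1 - w‖ ^ 2 / (1 - ‖w‖ ^ 2) := by
  intro w hw
  obtain ⟨C, -, hC⟩ := hnontan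
  have hz' : ∀ k, ‖z k‖ < 1 := fun k => mem_ball_zero_iff.1 (hz k)
  have hsmall : (fun k => f (z k) - z k) =o[atTop] fun k => 1 - ‖z k‖ :=
    isLittleO_one_sub_norm_of_tendsto_div hz' hasym hC
  have hfz : Tendsto (fun k => f (z k)) atTop (𝓝 1) := by
    simpa using hlim.add (hsmall.trans_tendsto (by simpa using hlim.norm.const_sub 1))
  refine le_of_tendsto_of_tendsto' (tendsto_sq_norm_one_sub_conj_mul_div hfz (f w)) ?_
    fun k => sq_norm_one_sub_conj_mul_div_le_of_mapsTo_ball hf hmap (hz' k)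
      (mem_ball_zero_iff.1 hw)
  simpa using (tendsto_one_sub_sq_norm_div hz' hsmall).mul
    (tendsto_sq_norm_one_sub_conj_mul_div hlim w)
end

section
/- Let Ω ⊂ ℂ^N be a bounded open set and π : Ω → ℂ a map that is holomorphic on Ω, Lipschitz on Ω, and satisfies π(Ω) ⊆ Δ. Let Φ : Δ → Ω be holomorphic with π(Φ(ζ)) = ζ for all ζ ∈ Δ, and let Φ̃ : Δ → Ω be holomorphic. Suppose (z_k) is a sequence in Δ converging to 1 nontangentially such that Φ̃(z_k) = Φ(z_k) + o(|z_k - 1|³) as k → ∞ (i.e. (Φ̃(z_k) - Φ(z_k))/|z_k - 1|³ → 0). Then π(Φ̃(ζ)) = ζ for all ζ ∈ Δ. -/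
/-!
Since `π ∘ Φ = id` and `π` is Lipschitz, the holomorphic self-map `f = π ∘ Φ̃` of the disc
satisfies `f z_k = z_k + o(|1 - z_k|³)`. Then `f z_k → 1` with boundary dilatation
`(1 - |f z_k|²) / (1 - |z_k|²) → 1`, so Julia's lemma gives `Re C(f w) ≥ Re C(w)` for the Cayley
transform `C w = (1 + w) / (1 - w)`. Thus `q = C ∘ f - C` has nonnegative real part, and
nontangentiality turns the cubic contact into `q z_k = o(1 - |z_k|)`. By the open mapping theorem
either `q` is constant, hence `0`, or `Re q > 0`; in the latter case `C ∘ (-q)` is a self-map of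
the disc with boundary dilatation `0` along `z_k`, which Julia's lemma forbids. So `C ∘ f = C`,
i.e. `f = id`.
-/

open Metric Filter

open Set Asymptotics Topology ComplexConjugate

namespace Complex

local notation "𝔻" => ball (0 : ℂ) 1

noncomputable def mobius (a z : ℂ) : ℂ := (z - a) / (1 - conj a * z)

noncomputable def cayley (w : ℂ) : ℂ := (1 + w) / (1 - w)

lemma one_sub_norm_sq_pos {z : ℂ} (hz : ‖z‖ < 1) : 0 < 1 - ‖z‖ ^ 2 :=
  sub_pos.2 (pow_lt_one₀ (norm_nonneg z) hz two_ne_zero)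

lemma ne_one_of_mem_ball {z : ℂ} (hz : z ∈ 𝔻) : z ≠ 1 := by
  rintro rfl
  simp at hz

lemma one_sub_conj_mul_ne_zero {a z : ℂ} (ha : ‖a‖ ≤ 1) (hz : ‖z‖ < 1) : 1 - conj a * z ≠ 0 := by
  intro h
  have h1 : ‖conj a * z‖ = 1 := by rw [← sub_eq_zero.mp h, norm_one]
  rw [norm_mul, norm_conj] at h1
  nlinarith [norm_nonneg a, norm_nonneg z]

lemma one_sub_norm_sq_mobius {a z : ℂ} (h : 1 - conj a * z ≠ 0) :
    1 - ‖mobius a z‖ ^ 2 = (1 - ‖a‖ ^ 2) * (1 - ‖z‖ ^ 2) / ‖1 - conj a * z‖ ^ 2 := by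
  have h' : ‖1 - conj a * z‖ ^ 2 ≠ 0 := by positivity
  rw [mobius, norm_div, div_pow, one_sub_div h']
  congr 1
  simp only [Complex.sq_norm, normSq_apply, sub_re, sub_im, mul_re, mul_im, one_re, one_im,
    conj_re, conj_im]
  ring

lemma norm_mobius_lt_one {a z : ℂ} (ha : ‖a‖ < 1) (hz : ‖z‖ < 1) : ‖mobius a z‖ < 1 := by
  have h : 0 < 1 - ‖mobius a z‖ ^ 2 := by
    rw [one_sub_norm_sq_mobius (one_sub_conj_mul_ne_zero ha.le hz)]
    exact div_pos (mul_pos (one_sub_norm_sq_pos ha) (one_sub_norm_sq_pos hz))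
      (by have := one_sub_conj_mul_ne_zero ha.le hz; positivity)
  exact (sq_lt_one_iff₀ (norm_nonneg _)).1 (by linarith)

lemma mobius_neg_mobius {a z : ℂ} (ha : ‖a‖ < 1) (hz : ‖z‖ < 1) :
    mobius (-a) (mobius a z) = z := by
  have hden : 1 - conj (-a) * mobius a z ≠ 0 :=
    one_sub_conj_mul_ne_zero (by rw [norm_neg]; exact ha.le) (norm_mobius_lt_one ha hz)
  have hw : mobius a z * (1 - conj a * z) = z - a :=
    div_mul_cancel₀ _ (one_sub_conj_mul_ne_zero ha.le hz)
  rw [mobius, div_eq_iff hden, map_neg]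
  linear_combination hw

lemma differentiableOn_mobius {a : ℂ} (ha : ‖a‖ < 1) : DifferentiableOn ℂ (mobius a) 𝔻 :=
  DifferentiableOn.div (by fun_prop) (by fun_prop) fun z hz =>
    one_sub_conj_mul_ne_zero ha.le (mem_ball_zero_iff.mp hz)

theorem schwarz_pick {f : ℂ → ℂ} (hd : DifferentiableOn ℂ f 𝔻) (hm : MapsTo f 𝔻 𝔻) {u v : ℂ}
    (hu : u ∈ 𝔻) (hv : v ∈ 𝔻) : ‖mobius (f v) (f u)‖ ≤ ‖mobius v u‖ := by
  rw [mem_ball_zero_iff] at hu hv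
  have hfv : ‖f v‖ < 1 := mem_ball_zero_iff.mp (hm (mem_ball_zero_iff.mpr hv))
  have hv' : ‖-v‖ < 1 := by rwa [norm_neg]
  have hmaps : MapsTo (mobius (-v)) 𝔻 𝔻 := fun w hw => by
    simpa using norm_mobius_lt_one hv' (mem_ball_zero_iff.mp hw)
  -- Schwarz's lemma for the self-map of the disc conjugated so as to fix the origin
  have h := norm_le_norm_of_mapsTo_ball (f := fun w => mobius (f v) (f (mobius (-v) w)))
    (((differentiableOn_mobius hfv).comp hd hm).comp (differentiableOn_mobius hv') hmaps)
    (fun w hw => ball_subset_closedBall (by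
      simpa using norm_mobius_lt_one hfv (mem_ball_zero_iff.mp (hm (hmaps hw)))))
    (by simp [mobius]) (norm_mobius_lt_one hv hu)
  rwa [mobius_neg_mobius hv hu] at h

theorem schwarz_pick_one_sub_sq {f : ℂ → ℂ} (hd : DifferentiableOn ℂ f 𝔻) (hm : MapsTo f 𝔻 𝔻)
    {u v : ℂ} (hu : u ∈ 𝔻) (hv : v ∈ 𝔻) :
    (1 - ‖v‖ ^ 2) * (1 - ‖u‖ ^ 2) / ‖1 - conj v * u‖ ^ 2 ≤
      (1 - ‖f v‖ ^ 2) * (1 - ‖f u‖ ^ 2) / ‖1 - conj (f v) * f u‖ ^ 2 := by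
  have hne {a z : ℂ} (ha : a ∈ 𝔻) (hz : z ∈ 𝔻) : 1 - conj a * z ≠ 0 :=
    one_sub_conj_mul_ne_zero (mem_ball_zero_iff.mp ha).le (mem_ball_zero_iff.mp hz)
  rw [← one_sub_norm_sq_mobius (hne hv hu), ← one_sub_norm_sq_mobius (hne (hm hv) (hm hu))]
  gcongr
  exact schwarz_pick hd hm hu hv

theorem julia {f : ℂ → ℂ} (hd : DifferentiableOn ℂ f 𝔻) (hm : MapsTo f 𝔻 𝔻) {z : ℕ → ℂ}
    (hz : ∀ k, z k ∈ 𝔻) (hz1 : Tendsto z atTop (𝓝 1))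
    (hf1 : Tendsto (fun k => f (z k)) atTop (𝓝 1)) {α : ℝ}
    (hα : Tendsto (fun k => (1 - ‖f (z k)‖ ^ 2) / (1 - ‖z k‖ ^ 2)) atTop (𝓝 α))
    {w : ℂ} (hw : w ∈ 𝔻) :
    (1 - ‖w‖ ^ 2) / ‖1 - w‖ ^ 2 ≤ α * ((1 - ‖f w‖ ^ 2) / ‖1 - f w‖ ^ 2) := by
  have hlim {s : ℕ → ℂ} {a : ℂ} (hs : Tendsto s atTop (𝓝 1)) (ha : a ∈ 𝔻) :
      Tendsto (fun k => (1 - ‖a‖ ^ 2) / ‖1 - conj (s k) * a‖ ^ 2) atTop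
        (𝓝 ((1 - ‖a‖ ^ 2) / ‖1 - a‖ ^ 2)) := by
    have hden : Tendsto (fun k => ‖1 - conj (s k) * a‖ ^ 2) atTop (𝓝 (‖1 - a‖ ^ 2)) := by
      simpa [Function.comp_def] using
        ((show Continuous fun x : ℂ => ‖1 - conj x * a‖ ^ 2 by fun_prop).tendsto 1).comp hs
    exact tendsto_const_nhds.div hden (by simpa [sub_eq_zero] using (ne_one_of_mem_ball ha).symm)
  have hbound (k : ℕ) : (1 - ‖w‖ ^ 2) / ‖1 - conj (z k) * w‖ ^ 2 ≤
      (1 - ‖f (z k)‖ ^ 2) / (1 - ‖z k‖ ^ 2) *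
        ((1 - ‖f w‖ ^ 2) / ‖1 - conj (f (z k)) * f w‖ ^ 2) := by
    have hpos := one_sub_norm_sq_pos (mem_ball_zero_iff.mp (hz k))
    have h := schwarz_pick_one_sub_sq hd hm hw (hz k)
    rw [mul_div_assoc, mul_div_assoc] at h
    rwa [div_mul_eq_mul_div, le_div_iff₀' hpos]
  exact le_of_tendsto_of_tendsto' (hlim hz1 hw) (hα.mul (hlim hf1 (hm hw))) hbound

theorem not_tendsto_one_sub_norm_sq_div_zero {f : ℂ → ℂ} (hd : DifferentiableOn ℂ f 𝔻)
    (hm : MapsTo f 𝔻 𝔻) {z : ℕ → ℂ} (hz : ∀ k, z k ∈ 𝔻) (hz1 : Tendsto z atTop (𝓝 1))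
    (hf1 : Tendsto (fun k => f (z k)) atTop (𝓝 1)) :
    ¬ Tendsto (fun k => (1 - ‖f (z k)‖ ^ 2) / (1 - ‖z k‖ ^ 2)) atTop (𝓝 0) := fun h => by
  have := julia hd hm hz hz1 hf1 h (mem_ball_self one_pos)
  norm_num at this

lemma re_cayley (w : ℂ) : (cayley w).re = (1 - ‖w‖ ^ 2) / ‖1 - w‖ ^ 2 := by
  rw [cayley, div_re, ← add_div, Complex.sq_norm, Complex.sq_norm]
  congr 1
  simp only [normSq_apply, add_re, add_im, sub_re, sub_im, one_re, one_im]
  ring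

lemma one_sub_norm_sq_cayley_neg {q : ℂ} (h : 1 + q ≠ 0) :
    1 - ‖cayley (-q)‖ ^ 2 = 4 * q.re / ‖1 + q‖ ^ 2 := by
  have h' : ‖1 + q‖ ^ 2 ≠ 0 := by positivity
  rw [cayley, sub_neg_eq_add, norm_div, div_pow, one_sub_div h']
  congr 1
  simp only [Complex.sq_norm, normSq_apply, add_re, add_im, neg_re, neg_im, one_re, one_im]
  ring

lemma one_sub_norm_sq_cayley_neg_mem_Ioc {q : ℂ} (h : 0 < q.re) :
    1 - ‖cayley (-q)‖ ^ 2 ∈ Ioc 0 (4 * ‖q‖) := by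
  have h1 : 1 ≤ ‖1 + q‖ := (by simp; linarith : 1 ≤ (1 + q).re).trans (re_le_norm _)
  rw [one_sub_norm_sq_cayley_neg (norm_pos_iff.1 (one_pos.trans_le h1))]
  refine ⟨by positivity, ?_⟩
  calc 4 * q.re / ‖1 + q‖ ^ 2 ≤ 4 * q.re := div_le_self (by positivity) (one_le_pow₀ h1)
    _ ≤ 4 * ‖q‖ := by gcongr; exact re_le_norm q

lemma cayley_sub_cayley {a b : ℂ} (ha : a ≠ 1) (hb : b ≠ 1) :
    cayley a - cayley b = 2 * (a - b) / ((1 - a) * (1 - b)) := by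
  rw [cayley, cayley, div_sub_div _ _ (sub_ne_zero.2 ha.symm) (sub_ne_zero.2 hb.symm)]
  ring

lemma cayley_injOn : InjOn cayley {1}ᶜ := fun a ha b hb h => by
  have h' := cayley_sub_cayley ha hb
  rw [h, sub_self, eq_comm, div_eq_zero_iff, mul_eq_zero, sub_eq_zero] at h'
  exact (h'.resolve_right (mul_ne_zero (sub_ne_zero.2 (Ne.symm ha))
    (sub_ne_zero.2 (Ne.symm hb)))).resolve_left two_ne_zero

lemma differentiableOn_cayley_comp {f : ℂ → ℂ} {s : Set ℂ} (hf : DifferentiableOn ℂ f s)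
    (h : ∀ w ∈ s, f w ≠ 1) : DifferentiableOn ℂ (fun w => cayley (f w)) s :=
  ((differentiableOn_const 1).add hf).div ((differentiableOn_const 1).sub hf) fun w hw =>
    sub_ne_zero.2 (h w hw).symm

section Asymptotics

variable {ι : Type*} {l : Filter ι} {z w : ι → ℂ}

lemma tendsto_one_sub_norm_sq (hz : Tendsto z l (𝓝 1)) :
    Tendsto (fun i => 1 - ‖z i‖ ^ 2) l (𝓝 0) := by
  simpa using ((continuous_norm.pow 2).tendsto 1).comp hz |>.const_sub 1

lemma tendsto_one_sub_norm_sq_div_of_isLittleO (hz : ∀ i, z i ∈ 𝔻) (hw : ∀ i, w i ∈ 𝔻)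
    (h : (fun i => w i - z i) =o[l] fun i => 1 - ‖z i‖ ^ 2) :
    Tendsto (fun i => (1 - ‖w i‖ ^ 2) / (1 - ‖z i‖ ^ 2)) l (𝓝 1) := by
  have hO : (fun i => ‖z i‖ ^ 2 - ‖w i‖ ^ 2) =O[l] fun i => w i - z i := by
    refine IsBigO.of_bound 2 (.of_forall fun i => ?_)
    have hzi := mem_ball_zero_iff.1 (hz i)
    have hwi := mem_ball_zero_iff.1 (hw i)
    calc ‖‖z i‖ ^ 2 - ‖w i‖ ^ 2‖ = (‖z i‖ + ‖w i‖) * |‖w i‖ - ‖z i‖| := by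
          rw [Real.norm_eq_abs, ← abs_of_nonneg (by positivity : 0 ≤ ‖z i‖ + ‖w i‖), ← abs_mul,
            ← abs_neg]
          ring_nf
      _ ≤ 2 * ‖w i - z i‖ :=
        mul_le_mul (by linarith) (abs_norm_sub_norm_le _ _) (abs_nonneg _) zero_le_two
  have hne (i : ι) : 1 - ‖z i‖ ^ 2 ≠ 0 := (one_sub_norm_sq_pos (mem_ball_zero_iff.1 (hz i))).ne'
  simpa using ((hO.trans_isLittleO h).tendsto_div_nhds_zero.const_add 1).congr fun i => by
    field_simp [hne i]
    ring

lemma isBigO_one_sub_pow_three (hz : Tendsto z l (𝓝 1)) :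
    (fun i => (1 - z i) ^ 3) =O[l] fun i => 1 - z i :=
  (((hz.const_sub 1).pow 2).isBigO_one ℂ |>.mul (isBigO_refl _ _)).congr
    (fun i => by ring) (fun i => one_mul _)

lemma cayley_sub_cayley_isLittleO (hz : ∀ i, z i ≠ 1) (hw : ∀ i, w i ≠ 1)
    (hz1 : Tendsto z l (𝓝 1)) (h : (fun i => w i - z i) =o[l] fun i => (1 - z i) ^ 3) :
    (fun i => cayley (w i) - cayley (z i)) =o[l] fun i => 1 - z i := by
  have hz' (i : ι) : 1 - z i ≠ 0 := sub_ne_zero.2 (hz i).symm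
  have hzw : (fun i => 1 - z i) =O[l] fun i => 1 - w i :=
    (h.trans_isBigO (isBigO_one_sub_pow_three hz1)).right_isBigO_sub.congr_right fun i => by ring
  have hinv : (fun i => ((1 - w i) * (1 - z i))⁻¹) =O[l] fun i => ((1 - z i) ^ 2)⁻¹ :=
    ((hzw.mul (isBigO_refl _ _)).congr_left fun i => (sq _).symm).inv_rev
      (.of_forall fun i h => absurd h (pow_ne_zero 2 (hz' i)))
  calc (fun i => cayley (w i) - cayley (z i))
      = fun i => 2 * ((w i - z i) * ((1 - w i) * (1 - z i))⁻¹) := by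
        funext i
        rw [cayley_sub_cayley (hw i) (hz i)]
        ring
    _ =o[l] fun i => (1 - z i) ^ 3 * ((1 - z i) ^ 2)⁻¹ := (h.mul_isBigO hinv).const_mul_left 2
    _ = fun i => 1 - z i := by
        funext i
        field_simp [hz' i]

end Asymptotics

lemma eqOn_const_or_re_pos {q : ℂ → ℂ} {U : Set ℂ} (hd : DifferentiableOn ℂ q U) (hU : IsOpen U)
    (hUc : IsPreconnected U) (hre : ∀ w ∈ U, 0 ≤ (q w).re) :
    (∃ c, ∀ w ∈ U, q w = c) ∨ ∀ w ∈ U, 0 < (q w).re := by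
  refine ((hd.analyticOnNhd hU).is_constant_or_isOpen hUc).imp id fun hopen w hw => ?_
  have : q '' U ⊆ interior {z : ℂ | 0 ≤ z.re} :=
    (hopen U subset_rfl hU).subset_interior_iff.2 (image_subset_iff.2 hre)
  simpa using this (mem_image_of_mem q hw)

theorem eqOn_zero_of_re_nonneg_of_isLittleO {q : ℂ → ℂ} (hd : DifferentiableOn ℂ q 𝔻)
    (hre : ∀ w ∈ 𝔻, 0 ≤ (q w).re) {z : ℕ → ℂ} (hz : ∀ k, z k ∈ 𝔻) (hz1 : Tendsto z atTop (𝓝 1))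
    (hq : (fun k => q (z k)) =o[atTop] fun k => 1 - ‖z k‖ ^ 2) : EqOn q 0 𝔻 := by
  have hq0 : Tendsto (fun k => q (z k)) atTop (𝓝 0) :=
    hq.trans_tendsto (tendsto_one_sub_norm_sq hz1)
  rcases eqOn_const_or_re_pos hd isOpen_ball (convex_ball 0 1).isPreconnected hre with
    ⟨c, hc⟩ | hpos
  · have hc0 : c = 0 := tendsto_nhds_unique
      (tendsto_const_nhds.congr fun k => (hc _ (hz k)).symm) hq0
    exact fun w hw => (hc w hw).trans hc0
  -- otherwise `cayley (-q)` would be a self-map of the disc violating Julia's lemma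
  exfalso
  have hQd : DifferentiableOn ℂ (fun w => cayley (-q w)) 𝔻 :=
    differentiableOn_cayley_comp hd.neg fun w hw h => by
      have := congrArg re h
      simp only [neg_re, one_re] at this
      linarith [hpos w hw]
  have hQm : MapsTo (fun w => cayley (-q w)) 𝔻 𝔻 := fun w hw => by
    have := (one_sub_norm_sq_cayley_neg_mem_Ioc (hpos w hw)).1
    exact mem_ball_zero_iff.2 ((sq_lt_one_iff₀ (norm_nonneg _)).1 (by linarith))
  have hQ1 : Tendsto (fun k => cayley (-q (z k))) atTop (𝓝 1) := by
    simpa [cayley, Pi.div_def] using (tendsto_const_nhds.add hq0.neg).div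
      (tendsto_const_nhds.sub hq0.neg) (by norm_num : (1 : ℂ) - -0 ≠ 0)
  have hQO : (fun k => 1 - ‖cayley (-q (z k))‖ ^ 2) =O[atTop] fun k => q (z k) :=
    IsBigO.of_bound 4 (.of_forall fun k => by
      obtain ⟨hpos', hle⟩ := one_sub_norm_sq_cayley_neg_mem_Ioc (hpos _ (hz k))
      rwa [Real.norm_of_nonneg hpos'.le])
  exact not_tendsto_one_sub_norm_sq_div_zero hQd hQm hz hz1 hQ1
    (hQO.trans_isLittleO hq).tendsto_div_nhds_zero

theorem burns_krantz {f : ℂ → ℂ} (hd : DifferentiableOn ℂ f 𝔻) (hm : MapsTo f 𝔻 𝔻)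
    {z : ℕ → ℂ} (hz : ∀ k, z k ∈ 𝔻) (hz1 : Tendsto z atTop (𝓝 1))
    (hnt : (fun k => 1 - z k) =O[atTop] fun k => 1 - ‖z k‖)
    (hf : (fun k => f (z k) - z k) =o[atTop] fun k => (1 - z k) ^ 3) : EqOn f id 𝔻 := by
  have hu : (fun k => 1 - ‖z k‖) =O[atTop] fun k => 1 - ‖z k‖ ^ 2 :=
    IsBigO.of_bound 1 (.of_forall fun k => by
      have := mem_ball_zero_iff.1 (hz k)
      rw [Real.norm_of_nonneg (by linarith), Real.norm_of_nonneg (one_sub_norm_sq_pos this).le]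
      nlinarith [norm_nonneg (z k)])
  have hfu : (fun k => f (z k) - z k) =o[atTop] fun k => 1 - ‖z k‖ ^ 2 :=
    hf.trans_isBigO ((isBigO_one_sub_pow_three hz1).trans (hnt.trans hu))
  have hf1 : Tendsto (fun k => f (z k)) atTop (𝓝 1) := by
    simpa using hz1.add (hfu.trans_tendsto (tendsto_one_sub_norm_sq hz1))
  have hratio := tendsto_one_sub_norm_sq_div_of_isLittleO hz (fun k => hm (hz k)) hfu
  have hre (w : ℂ) (hw : w ∈ 𝔻) : 0 ≤ (cayley (f w) - cayley w).re := by
    simpa [re_cayley] using julia hd hm hz hz1 hf1 hratio hw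
  have hq := (cayley_sub_cayley_isLittleO (fun k => ne_one_of_mem_ball (hz k))
    (fun k => ne_one_of_mem_ball (hm (hz k))) hz1 hf).trans_isBigO (hnt.trans hu)
  have hq0 := eqOn_zero_of_re_nonneg_of_isLittleO (q := fun w => cayley (f w) - cayley w)
    ((differentiableOn_cayley_comp hd fun w hw => ne_one_of_mem_ball (hm hw)).sub
      (differentiableOn_cayley_comp differentiableOn_id fun w hw => ne_one_of_mem_ball hw))
    hre hz hz1 hq
  exact fun w hw => cayley_injOn (ne_one_of_mem_ball (hm hw)) (ne_one_of_mem_ball hw)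
    (sub_eq_zero.1 (hq0 hw))

end Complex

theorem retraction_step_general (N : ℕ)
    (Ω : Set (Fin N → ℂ))
    (π : (Fin N → ℂ) → ℂ)
    (hπhol : DifferentiableOn ℂ π Ω)
    (hπlip : ∃ K : NNReal, LipschitzOnWith K π Ω)
    (hπmap : Set.MapsTo π Ω (ball (0 : ℂ) 1))
    (Φ : ℂ → (Fin N → ℂ))
    (hΦmap : Set.MapsTo Φ (ball (0 : ℂ) 1) Ω)
    (hretr : ∀ ζ ∈ ball (0 : ℂ) 1, π (Φ ζ) = ζ)
    (Φt : ℂ → (Fin N → ℂ))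
    (hΦthol : DifferentiableOn ℂ Φt (ball (0 : ℂ) 1))
    (hΦtmap : Set.MapsTo Φt (ball (0 : ℂ) 1) Ω)
    (z : ℕ → ℂ) (hz : ∀ k, z k ∈ ball (0 : ℂ) 1)
    (hlim : Tendsto z atTop (nhds 1))
    (hnontan : ∃ C > 0, ∀ k, ‖1 - z k‖ ≤ C * (1 - ‖z k‖))
    (hasym : Tendsto (fun k => (‖z k - 1‖ ^ 3)⁻¹ • (Φt (z k) - Φ (z k)))
      atTop (nhds 0)) :
    ∀ ζ ∈ ball (0 : ℂ) 1, π (Φt ζ) = ζ := by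
  obtain ⟨K, hK⟩ := hπlip
  obtain ⟨C, -, hC⟩ := hnontan
  have hnt : (fun k => 1 - z k) =O[atTop] fun k => 1 - ‖z k‖ :=
    IsBigO.of_bound C (.of_forall fun k => by
      rw [Real.norm_of_nonneg (sub_nonneg.2 (mem_ball_zero_iff.1 (hz k)).le)]
      exact hC k)
  have hΦ : (fun k => Φt (z k) - Φ (z k)) =o[atTop] fun k => (1 - z k) ^ 3 := by
    refine (isLittleO_norm_norm.1 ((isLittleO_iff_tendsto fun k h => ?_).2 ?_))
    · exact absurd h (by simpa [sub_eq_zero] using (Complex.ne_one_of_mem_ball (hz k)).symm)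
    · simpa [norm_smul, norm_sub_rev (1 : ℂ), div_eq_inv_mul] using hasym.norm
  have hπΦ : (fun k => π (Φt (z k)) - z k) =O[atTop] fun k => Φt (z k) - Φ (z k) :=
    IsBigO.of_bound K (.of_forall fun k => by
      simpa only [hretr _ (hz k), dist_eq_norm] using
        hK.dist_le_mul _ (hΦtmap (hz k)) _ (hΦmap (hz k)))
  exact Complex.burns_krantz (hπhol.comp hΦthol hΦtmap) (hπmap.comp hΦtmap) hz hlim hnt
    (hπΦ.trans_isLittleO hΦ)

/-- First step of the proof of Proposition 7.1: if `π` is a holomorphic retraction of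
`Ω` onto the disc along the stationary disc `Φ` (i.e. `π ∘ Φ = id`), and `Φ̃ : Δ → Ω`
is holomorphic with `Φ̃ z_k = Φ z_k + o(|z_k - 1|³)` along a nontangential sequence
`z_k → 1`, then `π ∘ Φ̃` is the identity on the disc. -/
theorem retraction_step (N : ℕ)
    (Ω : Set (Fin N → ℂ)) (hΩopen : IsOpen Ω) (hΩbdd : Bornology.IsBounded Ω)
    (π : (Fin N → ℂ) → ℂ)
    (hπhol : DifferentiableOn ℂ π Ω)
    (hπlip : ∃ K : NNReal, LipschitzOnWith K π Ω)
    (hπmap : Set.MapsTo π Ω (ball (0 : ℂ) 1))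
    (Φ : ℂ → (Fin N → ℂ))
    (hΦhol : DifferentiableOn ℂ Φ (ball (0 : ℂ) 1))
    (hΦmap : Set.MapsTo Φ (ball (0 : ℂ) 1) Ω)
    (hretr : ∀ ζ ∈ ball (0 : ℂ) 1, π (Φ ζ) = ζ)
    (Φt : ℂ → (Fin N → ℂ))
    (hΦthol : DifferentiableOn ℂ Φt (ball (0 : ℂ) 1))
    (hΦtmap : Set.MapsTo Φt (ball (0 : ℂ) 1) Ω)
    (z : ℕ → ℂ) (hz : ∀ k, z k ∈ ball (0 : ℂ) 1)
    (hlim : Tendsto z atTop (nhds 1))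
    (hnontan : ∃ C > 0, ∀ k, ‖1 - z k‖ ≤ C * (1 - ‖z k‖))
    (hasym : Tendsto (fun k => (‖z k - 1‖ ^ 3)⁻¹ • (Φt (z k) - Φ (z k)))
      atTop (nhds 0)) :
    ∀ ζ ∈ ball (0 : ℂ) 1, π (Φt ζ) = ζ :=
  retraction_step_general N Ω π hπhol hπlip hπmap Φ hΦmap hretr Φt hΦthol hΦtmap z hz hlim hnontan
    hasym
end
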